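/- (Theorem 3.1(3)) Assume 0 < μ < √a, (1−τ)μ² < λᵢ + τa for i = 1,2 whenever τ < 1, b + χ₂μ₂ − χ₁μ₁ > (τc_μ + μ)K_{τ,μ} + M̄_{τ,μ}, and b + 2(χ₂μ₂ − χ₁μ₁) > 2(M̄ + τc_μK). Let C₀ > 0 and let μ̃ satisfy μ < μ̃ < min{√a, 2μ, μ + (b + χ₂μ₂ − χ₁μ₁ − (τc_μ + μ)K_{τ,μ})/(1 + K_{τ,μ})} (and (1−τ)μ̃² < λᵢ + τa if τ < 1). Then there exists d₀ ≥ max{1, C₀^{(μ−μ̃)/μ}} such that for every d ≥ d₀ and every u ∈ E_{τ,μ}(C₀), the function W(x) := e^{−μx} − d·e^{−μ̃x} satisfies, for all x > ln(d)/(μ̃ − μ): W''(x) + (c_μ + d/dx(χ₂V₂ − χ₁V₁)(x;u))·W'(x) + (a + χ₂λ₂V₂(x;u) − χ₁λ₁V₁(x;u))·W(x) + (c_μτ·d/dx(χ₁V₁ − χ₂V₂)(x;u) − (b + χ₂μ₂ − χ₁μ₁)·W(x))·W(x) ≥ 0; i.e., U⁻ is a sub-solution of the associated equation on (ln(d)/(μ̃−μ),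 ∞). -/

import Mathlib

open MeasureTheory

/-- Vᵢ(x;u), with c_μ = μ + a/μ; `lam` is λᵢ, `m` is μᵢ. -/
noncomputable def Vfun (a τ lam m μ : ℝ) (u : ℝ → ℝ) (x : ℝ) : ℝ :=
  m * ∫ s in Set.Ioi (0:ℝ), ∫ z : ℝ,
    Real.exp (-lam * s) / Real.sqrt (4 * Real.pi * s) *
      Real.exp (-(x - z) ^ 2 / (4 * s)) * u (z + τ * (μ + a / μ) * s)

/-- u ∈ E_{τ,μ}(C₀). -/
def memE (C₀ μ μt d : ℝ) (u : ℝ → ℝ) : Prop :=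
  Continuous u ∧ ∀ x : ℝ,
    max 0 (Real.exp (-μ * x) - d * Real.exp (-μt * x)) ≤ u x ∧
    u x ≤ min C₀ (Real.exp (-μ * x))

/-- M̄ := ∫₀^∞ (χ₂λ₂μ₂e^{−λ₂s} − χ₁λ₁μ₁e^{−λ₁s})₊ ds -/
noncomputable def Mbar (χ₁ χ₂ lam₁ lam₂ μ₁ μ₂ : ℝ) : ℝ :=
  ∫ s in Set.Ioi (0:ℝ),
    max 0 (χ₂ * lam₂ * μ₂ * Real.exp (-lam₂ * s) - χ₁ * lam₁ * μ₁ * Real.exp (-lam₁ * s))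

/-- K := ∫₀^∞ |χ₁μ₁e^{−λ₁s} − χ₂μ₂e^{−λ₂s}|/(2√(πs)) ds -/
noncomputable def Kconst (χ₁ χ₂ lam₁ lam₂ μ₁ μ₂ : ℝ) : ℝ :=
  ∫ s in Set.Ioi (0:ℝ),
    |χ₁ * μ₁ * Real.exp (-lam₁ * s) - χ₂ * μ₂ * Real.exp (-lam₂ * s)| /
      (2 * Real.sqrt (Real.pi * s))

/-- M̄_{τ,μ} := ∫₀^∞ (χ₂μ₂λ₂e^{−λ₂s} − χ₁μ₁λ₁e^{−λ₁s})₊ e^{−(τμc_μ−μ²)s} ds -/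
noncomputable def Mbartm (a τ χ₁ χ₂ lam₁ lam₂ μ₁ μ₂ μ : ℝ) : ℝ :=
  ∫ s in Set.Ioi (0:ℝ),
    max 0 (χ₂ * μ₂ * lam₂ * Real.exp (-lam₂ * s) - χ₁ * μ₁ * lam₁ * Real.exp (-lam₁ * s)) *
      Real.exp (-(τ * μ * (μ + a / μ) - μ ^ 2) * s)

/-- K_{τ,μ} := ∫₀^∞ |χ₁μ₁e^{−λ₁s} − χ₂μ₂e^{−λ₂s}|·(1+μ√(πs))·e^{−(τμc_μ−μ²)s}/√(πs) ds -/
noncomputable def Ktm (a τ χ₁ χ₂ lam₁ lam₂ μ₁ μ₂ μ : ℝ) : ℝ :=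
  ∫ s in Set.Ioi (0:ℝ),
    |χ₁ * μ₁ * Real.exp (-lam₁ * s) - χ₂ * μ₂ * Real.exp (-lam₂ * s)| *
      (1 + μ * Real.sqrt (Real.pi * s)) *
      Real.exp (-(τ * μ * (μ + a / μ) - μ ^ 2) * s) / Real.sqrt (Real.pi * s)


/-!
Write `W = e^{-μx} - d e^{-μ̃x}` and `c_μ = μ + a/μ`. Since `μ` is a root of
`λ² - c_μ λ + a` and `μ < μ̃ < √a ≤ a/μ`, the linear part is
`W'' + c_μ W' + a W = d (c_μ μ̃ - μ̃² - a) e^{-μ̃x}` with a positive coefficient. Every other term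
is bounded by a constant times `e^{-2μx} ≤ e^{-μ̃x}` (because `μ̃ < 2μ` and `x > 0` on the region),
with a constant independent of `u ∈ E_{τ,μ}(C₀)`: from `0 ≤ u ≤ e^{-μz}`, the Gaussian integral
gives `0 ≤ Vᵢ ≤ C e^{-μx}`, and differentiating under both integrals gives `|Vᵢ'| ≤ C e^{-μx}`;
both integrals in `s` converge because `λᵢ + τ μ c_μ - μ² > 0`. Hence every large `d` works.
-/

open Real Set Filter Topology

section Gaussian

lemma exp_neg_mul_sq_sub_mul_exp_eq {b : ℝ} (hb : 0 < b) (ν x z : ℝ) :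
    exp (-b * (x - z) ^ 2) * exp (-ν * z) =
      exp (-b * (z - (x - ν / (2 * b))) ^ 2) * exp (-ν * x + ν ^ 2 / (4 * b)) := by
  rw [← exp_add, ← exp_add]
  congr 1
  field_simp
  ring

lemma integrable_exp_neg_mul_sq_sub_mul_exp {b : ℝ} (hb : 0 < b) (ν x : ℝ) :
    Integrable fun z => exp (-b * (x - z) ^ 2) * exp (-ν * z) := by
  simp_rw [exp_neg_mul_sq_sub_mul_exp_eq hb]
  exact ((integrable_exp_neg_mul_sq hb).comp_sub_right _).mul_const _

lemma integral_exp_neg_mul_sq_sub_mul_exp {b : ℝ} (hb : 0 < b) (ν x : ℝ) :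
    ∫ z, exp (-b * (x - z) ^ 2) * exp (-ν * z) = √(π / b) * exp (-ν * x + ν ^ 2 / (4 * b)) := by
  simp_rw [exp_neg_mul_sq_sub_mul_exp_eq hb]
  rw [integral_mul_const, integral_sub_right_eq_self (fun z => exp (-b * z ^ 2)),
    integral_gaussian]

lemma exp_neg_mul_sq_le_of_abs_sub_le {b y y₀ : ℝ} (hb : 0 ≤ b) (hy : |y - y₀| ≤ 1) (z : ℝ) :
    exp (-b * (y - z) ^ 2) ≤ exp b * exp (-(b / 2) * (y₀ - z) ^ 2) := by
  rw [← exp_add, exp_le_exp]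
  have : (y - y₀) ^ 2 ≤ 1 := by nlinarith [abs_nonneg (y - y₀), sq_abs (y - y₀)]
  nlinarith [sq_nonneg (y₀ + z - 2 * y), mul_le_mul_of_nonneg_left this hb]

/-- The factor `√ε` trades a fraction `ε` of the Gaussian decay for the linear weight, via
`r ≤ exp (r ^ 2)`. -/
lemma exp_neg_sq_div_mul_abs_div_le {s ε : ℝ} (hs : 0 < s) (hε : 0 < ε) (w : ℝ) :
    exp (-w ^ 2 / (4 * s)) * (|w| / (2 * s)) ≤ exp (-((1 - ε) / (4 * s)) * w ^ 2) / √(ε * s) := by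
  set r := √ε * |w| / (2 * √s)
  have hr : r ^ 2 = ε * w ^ 2 / (4 * s) := by
    rw [div_pow, mul_pow, mul_pow, sq_sqrt hε.le, sq_sqrt hs.le, sq_abs]
    ring
  have hr_le : r ≤ exp (r ^ 2) := by nlinarith [add_one_le_exp (r ^ 2), sq_nonneg (r - 1)]
  have hw : |w| / (2 * s) = r / √(ε * s) := by
    have hs' := sqrt_pos.2 hs
    simp only [r]
    rw [sqrt_mul hε.le]
    field_simp
    rw [sq_sqrt hs.le]
  calc exp (-w ^ 2 / (4 * s)) * (|w| / (2 * s))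
      ≤ exp (-w ^ 2 / (4 * s)) * (exp (r ^ 2) / √(ε * s)) := by
        rw [hw]; gcongr
    _ = exp (-((1 - ε) / (4 * s)) * w ^ 2) / √(ε * s) := by
        rw [mul_div_assoc', ← exp_add, hr]
        congr 2
        field_simp
        ring

lemma integrableOn_exp_neg_mul_div_sqrt {δ : ℝ} (hδ : 0 < δ) :
    IntegrableOn (fun s => exp (-δ * s) / √s) (Ioi 0) := by
  refine (integrableOn_rpow_mul_exp_neg_mul_rpow (s := -1 / 2) (p := 1) (by norm_num) one_pos
    hδ).congr_fun (fun s hs => ?_) measurableSet_Ioi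
  dsimp only
  rw [rpow_one, show (-1 / 2 : ℝ) = -(1 / 2) by norm_num, rpow_neg (le_of_lt hs), sqrt_eq_rpow]
  ring

end Gaussian

section HeatTerm

variable (lam c : ℝ) (u : ℝ → ℝ)

/-- `Vfun a τ lam m μ u x` is definitionally `m * ∫ s in Ioi 0, ∫ z, heatTerm lam c u s x z`
with `c = τ * (μ + a / μ)`. -/
noncomputable def heatTerm (s y z : ℝ) : ℝ :=
  exp (-lam * s) / √(4 * π * s) * exp (-(y - z) ^ 2 / (4 * s)) * u (z + c * s)

noncomputable def heatTermDeriv (s y z : ℝ) : ℝ :=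
  exp (-lam * s) / √(4 * π * s) * (exp (-(y - z) ^ 2 / (4 * s)) * (-(y - z) / (2 * s))) *
    u (z + c * s)

lemma hasDerivAt_heatTerm (s y z : ℝ) :
    HasDerivAt (fun y => heatTerm lam c u s y z) (heatTermDeriv lam c u s y z) y := by
  have hq : HasDerivAt (fun y => -(y - z) ^ 2 / (4 * s)) (-(y - z) / (2 * s)) y :=
    ((((hasDerivAt_id' y).sub_const z).pow 2).neg.div_const (4 * s)).congr_deriv (by ring)
  exact (hq.exp.const_mul _).mul_const _

variable {lam c u} {μ : ℝ}

lemma heatTerm_nonneg (hu0 : ∀ z, 0 ≤ u z) (s y z : ℝ) : 0 ≤ heatTerm lam c u s y z := by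
  unfold heatTerm
  have := hu0 (z + c * s)
  positivity

lemma le_exp_mul_exp_of_le_exp (huμ : ∀ z, u z ≤ exp (-μ * z)) (s z : ℝ) :
    u (z + c * s) ≤ exp (-μ * z) * exp (-(μ * (c * s))) := by
  rw [← exp_add]; convert huμ (z + c * s) using 2; ring

lemma heatTerm_le (huμ : ∀ z, u z ≤ exp (-μ * z)) (s y z : ℝ) :
    heatTerm lam c u s y z ≤ exp (-lam * s) / √(4 * π * s) * exp (-(μ * (c * s))) *
      (exp (-(1 / (4 * s)) * (y - z) ^ 2) * exp (-μ * z)) := by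
  calc heatTerm lam c u s y z
      ≤ exp (-lam * s) / √(4 * π * s) * exp (-(y - z) ^ 2 / (4 * s)) *
          (exp (-μ * z) * exp (-(μ * (c * s)))) := by
        unfold heatTerm; gcongr; exact le_exp_mul_exp_of_le_exp huμ s z
    _ = _ := by ring_nf

lemma abs_heatTermDeriv_le (hu0 : ∀ z, 0 ≤ u z) (huμ : ∀ z, u z ≤ exp (-μ * z)) {s ε : ℝ}
    (hs : 0 < s) (hε : 0 < ε) (y z : ℝ) :
    |heatTermDeriv lam c u s y z| ≤ exp (-lam * s) / √(4 * π * s) * exp (-(μ * (c * s))) /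
      √(ε * s) * (exp (-((1 - ε) / (4 * s)) * (y - z) ^ 2) * exp (-μ * z)) := by
  have hker : exp (-(y - z) ^ 2 / (4 * s)) * |-(y - z) / (2 * s)| ≤
      exp (-((1 - ε) / (4 * s)) * (y - z) ^ 2) / √(ε * s) := by
    rw [abs_div, abs_neg, abs_of_pos (by positivity : 0 < 2 * s)]
    exact exp_neg_sq_div_mul_abs_div_le hs hε (y - z)
  unfold heatTermDeriv
  rw [abs_mul, abs_mul, abs_mul, abs_of_nonneg (hu0 _), abs_of_nonneg (by positivity),
    abs_of_nonneg (exp_nonneg _)]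
  calc exp (-lam * s) / √(4 * π * s) * (exp (-(y - z) ^ 2 / (4 * s)) * |-(y - z) / (2 * s)|) *
        u (z + c * s)
      ≤ exp (-lam * s) / √(4 * π * s) * (exp (-((1 - ε) / (4 * s)) * (y - z) ^ 2) / √(ε * s)) *
          (exp (-μ * z) * exp (-(μ * (c * s)))) := by
        gcongr
        · exact hu0 _
        · exact le_exp_mul_exp_of_le_exp huμ s z
    _ = _ := by ring

end HeatTerm

section HeatIntegral

variable {lam c μ : ℝ} {u : ℝ → ℝ}

lemma integrable_heatTerm (hu : Continuous u) (hu0 : ∀ z, 0 ≤ u z)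
    (huμ : ∀ z, u z ≤ exp (-μ * z)) {s : ℝ} (hs : 0 < s) (y : ℝ) :
    Integrable (heatTerm lam c u s y) := by
  have hcont : Continuous (heatTerm lam c u s y) := by unfold heatTerm; fun_prop
  refine ((integrable_exp_neg_mul_sq_sub_mul_exp (by positivity : 0 < 1 / (4 * s)) μ y).const_mul
    (exp (-lam * s) / √(4 * π * s) * exp (-(μ * (c * s))))).mono' hcont.aestronglyMeasurable
    (Filter.Eventually.of_forall fun z => ?_)
  rw [norm_eq_abs, abs_of_nonneg (heatTerm_nonneg hu0 s y z)]
  exact heatTerm_le huμ s y z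

lemma integral_heatTerm_le (hu : Continuous u) (hu0 : ∀ z, 0 ≤ u z)
    (huμ : ∀ z, u z ≤ exp (-μ * z)) {s : ℝ} (hs : 0 < s) (y : ℝ) :
    ∫ z, heatTerm lam c u s y z ≤ exp (-(lam + (μ * c - μ ^ 2)) * s) * exp (-μ * y) := by
  have hb : 0 < 1 / (4 * s) := by positivity
  calc ∫ z, heatTerm lam c u s y z
      ≤ ∫ z, exp (-lam * s) / √(4 * π * s) * exp (-(μ * (c * s))) *
          (exp (-(1 / (4 * s)) * (y - z) ^ 2) * exp (-μ * z)) :=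
        integral_mono (integrable_heatTerm hu hu0 huμ hs y)
          ((integrable_exp_neg_mul_sq_sub_mul_exp hb μ y).const_mul _) (heatTerm_le huμ s y)
    _ = exp (-lam * s) / √(4 * π * s) * exp (-(μ * (c * s))) *
          (√(4 * π * s) * exp (-μ * y + μ ^ 2 * s)) := by
        rw [integral_const_mul, integral_exp_neg_mul_sq_sub_mul_exp hb]
        congr 4 <;> field_simp
    _ = exp (-(lam + (μ * c - μ ^ 2)) * s) * exp (-μ * y) := by
        have : √(4 * π * s) ≠ 0 := by positivity
        field_simp
        simp only [← exp_add]
        ring_nf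

lemma abs_integral_heatTermDeriv_le (hu0 : ∀ z, 0 ≤ u z) (huμ : ∀ z, u z ≤ exp (-μ * z))
    {s ε : ℝ} (hs : 0 < s) (hε0 : 0 < ε) (hε1 : ε < 1) (y : ℝ) :
    |∫ z, heatTermDeriv lam c u s y z| ≤
      exp (-(lam + (μ * c - μ ^ 2) - μ ^ 2 * ε / (1 - ε)) * s) / √s *
        (exp (-μ * y) / √(ε * (1 - ε))) := by
  have h1ε : 0 < 1 - ε := by linarith
  have hb : 0 < (1 - ε) / (4 * s) := by positivity
  calc |∫ z, heatTermDeriv lam c u s y z|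
      ≤ ∫ z, exp (-lam * s) / √(4 * π * s) * exp (-(μ * (c * s))) / √(ε * s) *
          (exp (-((1 - ε) / (4 * s)) * (y - z) ^ 2) * exp (-μ * z)) := by
        rw [← norm_eq_abs]
        exact norm_integral_le_of_norm_le
          ((integrable_exp_neg_mul_sq_sub_mul_exp hb μ y).const_mul _)
          (Filter.Eventually.of_forall fun z =>
            (norm_eq_abs _).trans_le (abs_heatTermDeriv_le hu0 huμ hs hε0 y z))
    _ = exp (-lam * s) / √(4 * π * s) * exp (-(μ * (c * s))) / √(ε * s) *
          (√(4 * π * s) / √(1 - ε) * exp (-μ * y + μ ^ 2 * s / (1 - ε))) := by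
        rw [integral_const_mul, integral_exp_neg_mul_sq_sub_mul_exp hb, ← sqrt_div' _ h1ε.le,
          show π / ((1 - ε) / (4 * s)) = 4 * π * s / (1 - ε) by field_simp,
          show μ ^ 2 / (4 * ((1 - ε) / (4 * s))) = μ ^ 2 * s / (1 - ε) by field_simp]
    _ = _ := by
        have : √(4 * π * s) ≠ 0 := by positivity
        rw [sqrt_mul hε0.le, sqrt_mul hε0.le]
        field_simp
        simp only [← exp_add]
        congr 1
        field_simp
        ring

lemma hasDerivAt_integral_heatTerm (hu : Continuous u) (hu0 : ∀ z, 0 ≤ u z)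
    (huμ : ∀ z, u z ≤ exp (-μ * z)) {s : ℝ} (hs : 0 < s) (y₀ : ℝ) :
    HasDerivAt (fun y => ∫ z, heatTerm lam c u s y z) (∫ z, heatTermDeriv lam c u s y₀ z) y₀ := by
  set A := exp (-lam * s) / √(4 * π * s) * exp (-(μ * (c * s))) / √(1 / 2 * s)
  set b := (1 - 1 / 2) / (4 * s)
  have hb : 0 < b := by positivity
  refine (hasDerivAt_integral_of_dominated_loc_of_deriv_le
    (bound := fun z => A * exp b * (exp (-(b / 2) * (y₀ - z) ^ 2) * exp (-μ * z)))
    (Metric.ball_mem_nhds y₀ one_pos)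
    (Filter.Eventually.of_forall fun y =>
      (integrable_heatTerm hu hu0 huμ hs y).aestronglyMeasurable)
    (integrable_heatTerm hu hu0 huμ hs y₀)
    (by unfold heatTermDeriv; fun_prop : Continuous _).aestronglyMeasurable
    (Filter.Eventually.of_forall fun z y hy => ?_)
    ((integrable_exp_neg_mul_sq_sub_mul_exp (half_pos hb) μ y₀).const_mul _)
    (Filter.Eventually.of_forall fun z y _ => hasDerivAt_heatTerm lam c u s y z)).2
  rw [norm_eq_abs, mul_assoc A, ← mul_assoc (exp b)]
  refine (abs_heatTermDeriv_le hu0 huμ hs one_half_pos y z).trans ?_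
  gcongr
  exact exp_neg_mul_sq_le_of_abs_sub_le hb.le (mem_ball_iff_norm.1 hy).le z

end HeatIntegral

section HeatPotential

variable {lam c μ : ℝ} {u : ℝ → ℝ}

lemma aestronglyMeasurable_integral_heatTerm (hu : Continuous u) (y : ℝ) :
    AEStronglyMeasurable (fun s => ∫ z, heatTerm lam c u s y z) (volume.restrict (Ioi 0)) :=
  (show Measurable fun p : ℝ × ℝ => heatTerm lam c u p.1 y p.2 by
    unfold heatTerm; fun_prop).aestronglyMeasurable.integral_prod_right'

lemma aestronglyMeasurable_integral_heatTermDeriv (hu : Continuous u) (y : ℝ) :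
    AEStronglyMeasurable (fun s => ∫ z, heatTermDeriv lam c u s y z) (volume.restrict (Ioi 0)) :=
  (show Measurable fun p : ℝ × ℝ => heatTermDeriv lam c u p.1 y p.2 by
    unfold heatTermDeriv; fun_prop).aestronglyMeasurable.integral_prod_right'

lemma integrableOn_integral_heatTerm (hu : Continuous u) (hu0 : ∀ z, 0 ≤ u z)
    (huμ : ∀ z, u z ≤ exp (-μ * z)) (hκ : 0 < lam + (μ * c - μ ^ 2)) (y : ℝ) :
    IntegrableOn (fun s => ∫ z, heatTerm lam c u s y z) (Ioi 0) :=
  ((exp_neg_integrableOn_Ioi 0 hκ).mul_const (exp (-μ * y))).mono'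
    (aestronglyMeasurable_integral_heatTerm hu y)
    (ae_restrict_of_forall_mem measurableSet_Ioi fun s hs => by
      rw [norm_eq_abs, abs_of_nonneg (integral_nonneg fun z => heatTerm_nonneg hu0 s y z)]
      exact integral_heatTerm_le hu hu0 huμ hs y)

lemma integral_integral_heatTerm_le (hu : Continuous u) (hu0 : ∀ z, 0 ≤ u z)
    (huμ : ∀ z, u z ≤ exp (-μ * z)) (hκ : 0 < lam + (μ * c - μ ^ 2)) (y : ℝ) :
    ∫ s in Ioi 0, ∫ z, heatTerm lam c u s y z ≤ exp (-μ * y) / (lam + (μ * c - μ ^ 2)) := by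
  calc ∫ s in Ioi 0, ∫ z, heatTerm lam c u s y z
      ≤ ∫ s in Ioi 0, exp (-(lam + (μ * c - μ ^ 2)) * s) * exp (-μ * y) :=
        setIntegral_mono_on (integrableOn_integral_heatTerm hu hu0 huμ hκ y)
          ((exp_neg_integrableOn_Ioi 0 hκ).mul_const _) measurableSet_Ioi
          fun s hs => integral_heatTerm_le hu hu0 huμ hs y
    _ = exp (-μ * y) / (lam + (μ * c - μ ^ 2)) := by
        rw [integral_mul_const, integral_exp_mul_Ioi (neg_lt_zero.2 hκ)]
        field_simp
        simp

lemma hasDerivAt_integral_integral_heatTerm (hμ : 0 ≤ μ) (hu : Continuous u)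
    (hu0 : ∀ z, 0 ≤ u z) (huμ : ∀ z, u z ≤ exp (-μ * z)) {ε : ℝ} (hε0 : 0 < ε) (hε1 : ε < 1)
    (hδ : 0 < lam + (μ * c - μ ^ 2) - μ ^ 2 * ε / (1 - ε)) (x : ℝ) :
    HasDerivAt (fun y => ∫ s in Ioi 0, ∫ z, heatTerm lam c u s y z)
      (∫ s in Ioi 0, ∫ z, heatTermDeriv lam c u s x z) x := by
  have hκ : 0 < lam + (μ * c - μ ^ 2) := by
    have : 0 ≤ μ ^ 2 * ε / (1 - ε) := div_nonneg (by positivity) (by linarith)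
    linarith
  refine (hasDerivAt_integral_of_dominated_loc_of_deriv_le
    (bound := fun s => exp (-(lam + (μ * c - μ ^ 2) - μ ^ 2 * ε / (1 - ε)) * s) / √s *
      (exp (-μ * (x - 1)) / √(ε * (1 - ε))))
    (Metric.ball_mem_nhds x one_pos)
    (Filter.Eventually.of_forall fun y => aestronglyMeasurable_integral_heatTerm hu y)
    (integrableOn_integral_heatTerm hu hu0 huμ hκ x)
    (aestronglyMeasurable_integral_heatTermDeriv hu x)
    (ae_restrict_of_forall_mem measurableSet_Ioi fun s hs y hy => ?_)
    ((integrableOn_exp_neg_mul_div_sqrt hδ).mul_const _)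
    (ae_restrict_of_forall_mem measurableSet_Ioi fun s hs y _ =>
      hasDerivAt_integral_heatTerm hu hu0 huμ hs y)).2
  rw [norm_eq_abs]
  refine (abs_integral_heatTermDeriv_le hu0 huμ hs hε0 hε1 y).trans ?_
  have hxy : x - 1 < y := by linarith [(abs_lt.1 (mem_ball_iff_norm.1 hy)).1]
  have : exp (-μ * y) ≤ exp (-μ * (x - 1)) := exp_le_exp.2 (by nlinarith)
  gcongr

lemma abs_integral_integral_heatTermDeriv_le (hu0 : ∀ z, 0 ≤ u z)
    (huμ : ∀ z, u z ≤ exp (-μ * z)) {ε : ℝ} (hε0 : 0 < ε) (hε1 : ε < 1)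
    (hδ : 0 < lam + (μ * c - μ ^ 2) - μ ^ 2 * ε / (1 - ε)) (x : ℝ) :
    |∫ s in Ioi 0, ∫ z, heatTermDeriv lam c u s x z| ≤
      (∫ s in Ioi 0, exp (-(lam + (μ * c - μ ^ 2) - μ ^ 2 * ε / (1 - ε)) * s) / √s) /
        √(ε * (1 - ε)) * exp (-μ * x) := by
  rw [← norm_eq_abs]
  calc ‖∫ s in Ioi 0, ∫ z, heatTermDeriv lam c u s x z‖
      ≤ ∫ s in Ioi 0, exp (-(lam + (μ * c - μ ^ 2) - μ ^ 2 * ε / (1 - ε)) * s) / √s *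
          (exp (-μ * x) / √(ε * (1 - ε))) :=
        norm_integral_le_of_norm_le ((integrableOn_exp_neg_mul_div_sqrt hδ).mul_const _)
          (ae_restrict_of_forall_mem measurableSet_Ioi fun s hs =>
            (norm_eq_abs _).trans_le (abs_integral_heatTermDeriv_le hu0 huμ hs hε0 hε1 x))
    _ = _ := by rw [integral_mul_const]; ring

end HeatPotential

lemma exists_pos_lt_one_mul_div_one_sub_lt {κ : ℝ} (hκ : 0 < κ) (μ : ℝ) :
    ∃ ε, 0 < ε ∧ ε < 1 ∧ μ ^ 2 * ε / (1 - ε) < κ := by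
  have hcont : ContinuousAt (fun ε : ℝ => μ ^ 2 * ε / (1 - ε)) 0 := by fun_prop (disch := norm_num)
  have hlim : ∀ᶠ ε in 𝓝[>] (0 : ℝ), μ ^ 2 * ε / (1 - ε) < κ ∧ ε < 1 :=
    nhdsWithin_le_nhds ((hcont.eventually (gt_mem_nhds (by simpa using hκ))).and
      (gt_mem_nhds one_pos))
  obtain ⟨ε, ⟨hεκ, hε1⟩, hε0⟩ := (hlim.and self_mem_nhdsWithin).exists
  exact ⟨ε, hε0, hε1, hεκ⟩

section Vfun

variable {a τ lam m μ : ℝ} {u : ℝ → ℝ}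

lemma Vfun_nonneg (hm : 0 ≤ m) (hu0 : ∀ z, 0 ≤ u z) (x : ℝ) : 0 ≤ Vfun a τ lam m μ u x :=
  mul_nonneg hm (setIntegral_nonneg measurableSet_Ioi fun s _ =>
    integral_nonneg fun z => heatTerm_nonneg hu0 s x z)

lemma Vfun_le (hm : 0 ≤ m) (hu : Continuous u) (hu0 : ∀ z, 0 ≤ u z)
    (huμ : ∀ z, u z ≤ exp (-μ * z)) (hκ : 0 < lam + (μ * (τ * (μ + a / μ)) - μ ^ 2)) (x : ℝ) :
    Vfun a τ lam m μ u x ≤ m / (lam + (μ * (τ * (μ + a / μ)) - μ ^ 2)) * exp (-μ * x) := by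
  rw [div_mul_eq_mul_div, mul_div_assoc]
  exact mul_le_mul_of_nonneg_left (integral_integral_heatTerm_le hu hu0 huμ hκ x) hm

lemma exists_forall_hasDerivAt_Vfun_abs_le (hm : 0 ≤ m) (hμ : 0 ≤ μ)
    (hκ : 0 < lam + (μ * (τ * (μ + a / μ)) - μ ^ 2)) :
    ∃ C, ∀ u : ℝ → ℝ, Continuous u → (∀ z, 0 ≤ u z) → (∀ z, u z ≤ exp (-μ * z)) →
      ∀ x, ∃ D, HasDerivAt (Vfun a τ lam m μ u) D x ∧ |D| ≤ C * exp (-μ * x) := by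
  obtain ⟨ε, hε0, hε1, hε⟩ := exists_pos_lt_one_mul_div_one_sub_lt hκ μ
  have hδ : 0 < lam + (μ * (τ * (μ + a / μ)) - μ ^ 2) - μ ^ 2 * ε / (1 - ε) := by linarith
  refine ⟨m * ((∫ s in Ioi 0,
      exp (-(lam + (μ * (τ * (μ + a / μ)) - μ ^ 2) - μ ^ 2 * ε / (1 - ε)) * s) / √s) /
        √(ε * (1 - ε))), fun u hu hu0 huμ x => ⟨_,
    (hasDerivAt_integral_integral_heatTerm hμ hu hu0 huμ hε0 hε1 hδ x).const_mul m, ?_⟩⟩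
  rw [abs_mul, abs_of_nonneg hm, mul_assoc]
  exact mul_le_mul_of_nonneg_left (abs_integral_integral_heatTermDeriv_le hu0 huμ hε0 hε1 hδ x) hm

end Vfun

lemma decay_rate_pos {a τ lam μ : ℝ} (ha : 0 < a) (hμ : 0 < μ) (hlam : 0 < lam)
    (h : τ < 1 → (1 - τ) * μ ^ 2 < lam + τ * a) :
    0 < lam + (μ * (τ * (μ + a / μ)) - μ ^ 2) := by
  have hexpand : μ * (τ * (μ + a / μ)) = τ * μ ^ 2 + τ * a := by field_simp
  rw [hexpand]
  rcases lt_or_ge τ 1 with hτ | hτ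
  · linarith [h hτ]
  · nlinarith [mul_nonneg (sub_nonneg.2 hτ) (sq_nonneg μ)]

lemma exists_chemotaxis_bounds {a τ χ₁ χ₂ lam₁ lam₂ μ₁ μ₂ μ : ℝ} (hχ₁ : 0 ≤ χ₁) (hχ₂ : 0 ≤ χ₂)
    (hlam₁ : 0 ≤ lam₁) (hlam₂ : 0 ≤ lam₂) (hμ₁ : 0 ≤ μ₁) (hμ₂ : 0 ≤ μ₂) (hμ : 0 ≤ μ)
    (hκ₁ : 0 < lam₁ + (μ * (τ * (μ + a / μ)) - μ ^ 2))
    (hκ₂ : 0 < lam₂ + (μ * (τ * (μ + a / μ)) - μ ^ 2)) :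
    ∃ K M, 0 ≤ M ∧ ∀ u : ℝ → ℝ, Continuous u → (∀ z, 0 ≤ u z) → (∀ z, u z ≤ exp (-μ * z)) →
      ∀ x, ∃ Q,
        HasDerivAt (fun y => χ₂ * Vfun a τ lam₂ μ₂ μ u y - χ₁ * Vfun a τ lam₁ μ₁ μ u y) Q x ∧
        HasDerivAt (fun y => χ₁ * Vfun a τ lam₁ μ₁ μ u y - χ₂ * Vfun a τ lam₂ μ₂ μ u y) (-Q) x ∧
        |Q| ≤ K * exp (-μ * x) ∧
        -(M * exp (-μ * x)) ≤
          χ₂ * lam₂ * Vfun a τ lam₂ μ₂ μ u x - χ₁ * lam₁ * Vfun a τ lam₁ μ₁ μ u x := by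
  obtain ⟨C₁, hC₁⟩ := exists_forall_hasDerivAt_Vfun_abs_le hμ₁ hμ hκ₁
  obtain ⟨C₂, hC₂⟩ := exists_forall_hasDerivAt_Vfun_abs_le hμ₂ hμ hκ₂
  refine ⟨χ₁ * C₁ + χ₂ * C₂, χ₁ * lam₁ * (μ₁ / (lam₁ + (μ * (τ * (μ + a / μ)) - μ ^ 2))),
    mul_nonneg (mul_nonneg hχ₁ hlam₁) (div_nonneg hμ₁ hκ₁.le), fun u hu hu0 huμ x => ?_⟩
  obtain ⟨D₁, hD₁, hD₁C⟩ := hC₁ u hu hu0 huμ x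
  obtain ⟨D₂, hD₂, hD₂C⟩ := hC₂ u hu hu0 huμ x
  refine ⟨χ₂ * D₂ - χ₁ * D₁, (hD₂.const_mul χ₂).sub (hD₁.const_mul χ₁),
    ((hD₁.const_mul χ₁).sub (hD₂.const_mul χ₂)).congr_deriv (by ring), ?_, ?_⟩
  · calc |χ₂ * D₂ - χ₁ * D₁| ≤ χ₂ * |D₂| + χ₁ * |D₁| := by
          simpa only [abs_mul, abs_of_nonneg hχ₁, abs_of_nonneg hχ₂] using
            abs_sub (χ₂ * D₂) (χ₁ * D₁)
      _ ≤ χ₂ * (C₂ * exp (-μ * x)) + χ₁ * (C₁ * exp (-μ * x)) := by gcongr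
      _ = (χ₁ * C₁ + χ₂ * C₂) * exp (-μ * x) := by ring
  · have hV₁ := mul_le_mul_of_nonneg_left (Vfun_le hμ₁ hu hu0 huμ hκ₁ x)
      (mul_nonneg hχ₁ hlam₁)
    have hV₂ := mul_nonneg (mul_nonneg hχ₂ hlam₂)
      (Vfun_nonneg (a := a) (τ := τ) (lam := lam₂) (μ := μ) hμ₂ hu0 x)
    linarith


lemma hasDerivAt_exp_neg_mul (p x : ℝ) :
    HasDerivAt (fun y => exp (-p * y)) (-p * exp (-p * x)) x := by
  simpa [mul_comm] using ((hasDerivAt_id x).const_mul (-p)).exp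

lemma deriv_exp_sub_mul_exp (p q d x : ℝ) :
    deriv (fun y => exp (-p * y) - d * exp (-q * y)) x =
      -p * exp (-p * x) + d * q * exp (-q * x) :=
  ((hasDerivAt_exp_neg_mul p x).sub ((hasDerivAt_exp_neg_mul q x).const_mul d)).deriv.trans
    (by ring)

lemma deriv_deriv_exp_sub_mul_exp (p q d x : ℝ) :
    deriv (deriv fun y => exp (-p * y) - d * exp (-q * y)) x =
      p ^ 2 * exp (-p * x) - d * q ^ 2 * exp (-q * x) := by
  rw [funext (deriv_exp_sub_mul_exp p q d)]
  exact (((hasDerivAt_exp_neg_mul p x).const_mul (-p)).add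
    ((hasDerivAt_exp_neg_mul q x).const_mul (d * q))).deriv.trans (by ring)

section Profile

variable {a μ μt d x : ℝ}

lemma mul_exp_le_exp_of_log_div_lt (hμμt : μ < μt) (hd : 0 < d) (hx : log d / (μt - μ) < x) :
    d * exp (-μt * x) ≤ exp (-μ * x) := by
  rw [div_lt_iff₀ (sub_pos.2 hμμt), log_lt_iff_lt_exp hd] at hx
  calc d * exp (-μt * x) ≤ exp (x * (μt - μ)) * exp (-μt * x) := by gcongr
    _ = exp (-μ * x) := by rw [← exp_add]; ring_nf

lemma exp_neg_mul_sq_le (hμt : μt ≤ 2 * μ) (hx : 0 ≤ x) : exp (-μ * x) ^ 2 ≤ exp (-μt * x) := by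
  rw [sq, ← exp_add, exp_le_exp]
  nlinarith

lemma sq_sub_mul_add_neg (hμ : 0 < μ) (hμμt : μ < μt) (hμta : μt < √a) :
    μt ^ 2 - (μ + a / μ) * μt + a < 0 := by
  have ha : 0 < a := sqrt_pos.1 (by linarith)
  have hμμta : μ * μt < a := by nlinarith [sq_sqrt ha.le]
  have hfactor : μ * (μt ^ 2 - (μ + a / μ) * μt + a) = (μt - μ) * (μ * μt - a) := by
    field_simp; ring
  exact neg_of_mul_neg_right (hfactor ▸ mul_neg_of_pos_of_neg (sub_pos.2 hμμt)
    (sub_neg.2 hμμta)) hμ.le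

end Profile

lemma subsolution_of_bounds {c a τ B Q Λ W W' W'' e K M L : ℝ} (hcτ : 0 ≤ c * τ) (hM : 0 ≤ M)
    (hW : 0 ≤ W) (hWe : W ≤ e) (hW' : |W'| ≤ L * e) (hQ : |Q| ≤ K * e) (hΛ : -(M * e) ≤ Λ)
    (hlin : (K * L + M + c * τ * K + |B|) * e ^ 2 ≤ W'' + c * W' + a * W) :
    0 ≤ W'' + (c + Q) * W' + (a + Λ) * W + (c * τ * -Q - B * W) * W := by
  have hKe : 0 ≤ K * e := (abs_nonneg _).trans hQ
  have hQW' : -(K * e * (L * e)) ≤ Q * W' := by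
    have := mul_le_mul hQ hW' (abs_nonneg _) hKe
    rw [← abs_mul] at this
    linarith [neg_abs_le (Q * W')]
  have hΛW : -(M * e * e) ≤ Λ * W := by
    have hMe : 0 ≤ M * e := mul_nonneg hM (hW.trans hWe)
    nlinarith [mul_le_mul_of_nonneg_right hΛ hW, mul_le_mul_of_nonneg_left hWe hMe]
  have hQW : Q * W ≤ K * e * e := by
    have hQK : Q ≤ K * e := (le_abs_self Q).trans hQ
    nlinarith [mul_le_mul_of_nonneg_right hQK hW, mul_le_mul_of_nonneg_left hWe hKe]
  have hBW : B * W ^ 2 ≤ |B| * e ^ 2 :=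
    mul_le_mul (le_abs_self B) (pow_le_pow_left₀ hW hWe 2) (sq_nonneg W) (abs_nonneg B)
  linarith [mul_le_mul_of_nonneg_left hQW hcτ]

lemma profile_subsolution {a τ B μ μt d x Q Λ K M : ℝ} (hμ : 0 < μ) (hμμt : μ < μt)
    (hμta : μt < √a) (hμt2 : μt < 2 * μ) (hτ : 0 ≤ τ) (hM : 0 ≤ M) (hd1 : 1 ≤ d)
    (hd : (K * (μ + μt) + M + (μ + a / μ) * τ * K + |B|) /
      -(μt ^ 2 - (μ + a / μ) * μt + a) ≤ d)
    (hx : log d / (μt - μ) < x) (hQ : |Q| ≤ K * exp (-μ * x)) (hΛ : -(M * exp (-μ * x)) ≤ Λ) :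
    0 ≤ (μ ^ 2 * exp (-μ * x) - d * μt ^ 2 * exp (-μt * x)) +
      ((μ + a / μ) + Q) * (-μ * exp (-μ * x) + d * μt * exp (-μt * x)) +
      (a + Λ) * (exp (-μ * x) - d * exp (-μt * x)) +
      ((μ + a / μ) * τ * -Q - B * (exp (-μ * x) - d * exp (-μt * x))) *
        (exp (-μ * x) - d * exp (-μt * x)) := by
  have hx0 : 0 ≤ x := (div_nonneg (log_nonneg hd1) (sub_pos.2 hμμt).le).trans hx.le
  have hde : d * exp (-μt * x) ≤ exp (-μ * x) :=
    mul_exp_le_exp_of_log_div_lt hμμt (by linarith) hx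
  have hde0 : 0 ≤ d * exp (-μt * x) := by positivity
  have hgap := sq_sub_mul_add_neg hμ hμμt hμta
  have hc : 0 < μ + a / μ := by
    have : 0 < a := sqrt_pos.1 (by linarith)
    positivity
  refine subsolution_of_bounds (L := μ + μt) (mul_nonneg hc.le hτ) hM (by linarith) (by linarith)
    ?_ hQ hΛ ?_
  · exact abs_le.2 ⟨by nlinarith, by nlinarith⟩
  · calc (K * (μ + μt) + M + (μ + a / μ) * τ * K + |B|) * exp (-μ * x) ^ 2
        ≤ (d * -(μt ^ 2 - (μ + a / μ) * μt + a)) * exp (-μ * x) ^ 2 := by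
          gcongr
          exact (div_le_iff₀ (by linarith)).1 hd
      _ ≤ (d * -(μt ^ 2 - (μ + a / μ) * μt + a)) * exp (-μt * x) := by
          gcongr
          · nlinarith
          · exact exp_neg_mul_sq_le hμt2.le hx0
      _ = _ := by field_simp; ring

theorem stmt_16_general (a b τ χ₁ χ₂ lam₁ lam₂ μ₁ μ₂ μ μt C₀ : ℝ)
    (ha : 0 < a) (hτ : 0 < τ)
    (hχ₁ : 0 < χ₁) (hχ₂ : 0 < χ₂) (hlam₁ : 0 < lam₁) (hlam₂ : 0 < lam₂)
    (hμ₁ : 0 < μ₁) (hμ₂ : 0 < μ₂)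
    (hμ0 : 0 < μ)
    (hτμ : τ < 1 → (1 - τ) * μ ^ 2 < lam₁ + τ * a ∧ (1 - τ) * μ ^ 2 < lam₂ + τ * a)
    (hμt₁ : μ < μt)
    (hμt₂ : μt < min (Real.sqrt a) (min (2 * μ)
      (μ + (b + χ₂ * μ₂ - χ₁ * μ₁ - (τ * (μ + a / μ) + μ) * Ktm a τ χ₁ χ₂ lam₁ lam₂ μ₁ μ₂ μ) /
        (1 + Ktm a τ χ₁ χ₂ lam₁ lam₂ μ₁ μ₂ μ)))) :
    ∃ d₀ ≥ max 1 (C₀ ^ ((μ - μt) / μ)),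
    ∀ d ≥ d₀, ∀ u : ℝ → ℝ, memE C₀ μ μt d u →
    ∀ x : ℝ, x > Real.log d / (μt - μ) →
      deriv (deriv (fun y => Real.exp (-μ * y) - d * Real.exp (-μt * y))) x +
        ((μ + a / μ) +
          deriv (fun y => χ₂ * Vfun a τ lam₂ μ₂ μ u y - χ₁ * Vfun a τ lam₁ μ₁ μ u y) x) *
          deriv (fun y => Real.exp (-μ * y) - d * Real.exp (-μt * y)) x +
        (a + χ₂ * lam₂ * Vfun a τ lam₂ μ₂ μ u x - χ₁ * lam₁ * Vfun a τ lam₁ μ₁ μ u x) *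
          (Real.exp (-μ * x) - d * Real.exp (-μt * x)) +
        ((μ + a / μ) * τ *
            deriv (fun y => χ₁ * Vfun a τ lam₁ μ₁ μ u y - χ₂ * Vfun a τ lam₂ μ₂ μ u y) x -
          (b + χ₂ * μ₂ - χ₁ * μ₁) * (Real.exp (-μ * x) - d * Real.exp (-μt * x))) *
          (Real.exp (-μ * x) - d * Real.exp (-μt * x)) ≥ 0 := by
  have hμt_sqrt : μt < √a := hμt₂.trans_le (min_le_left _ _)
  have hμt_two : μt < 2 * μ := hμt₂.trans_le ((min_le_right _ _).trans (min_le_left _ _))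
  obtain ⟨K, M, hM, hKM⟩ := exists_chemotaxis_bounds hχ₁.le hχ₂.le hlam₁.le hlam₂.le hμ₁.le
    hμ₂.le hμ0.le (decay_rate_pos ha hμ0 hlam₁ fun h => (hτμ h).1)
    (decay_rate_pos ha hμ0 hlam₂ fun h => (hτμ h).2)
  refine ⟨max (max 1 (C₀ ^ ((μ - μt) / μ)))
    ((K * (μ + μt) + M + (μ + a / μ) * τ * K + |b + χ₂ * μ₂ - χ₁ * μ₁|) /
      -(μt ^ 2 - (μ + a / μ) * μt + a)), le_max_left _ _, fun d hd u hu x hx => ?_⟩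
  obtain ⟨Q, hQ₂₁, hQ₁₂, hQ, hΛ⟩ := hKM u hu.1 (fun z => (le_max_left _ _).trans (hu.2 z).1)
    (fun z => (hu.2 z).2.trans (min_le_right _ _)) x
  have key := profile_subsolution hμ0 hμt₁ hμt_sqrt hμt_two hτ.le hM
    ((le_max_left _ _).trans (le_of_max_le_left hd)) (le_of_max_le_right hd) hx hQ hΛ
  rw [deriv_deriv_exp_sub_mul_exp, deriv_exp_sub_mul_exp, hQ₂₁.deriv, hQ₁₂.deriv]
  linarith

/-- Theorem 3.1(3): W(x) = e^{−μx} − d e^{−μ̃x} is a sub-solution on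
(ln d/(μ̃−μ), ∞) for all d ≥ d₀. -/
theorem stmt_16 (a b τ χ₁ χ₂ lam₁ lam₂ μ₁ μ₂ μ μt C₀ : ℝ)
    (ha : 0 < a) (hb : 0 < b) (hτ : 0 < τ)
    (hχ₁ : 0 < χ₁) (hχ₂ : 0 < χ₂) (hlam₁ : 0 < lam₁) (hlam₂ : 0 < lam₂)
    (hμ₁ : 0 < μ₁) (hμ₂ : 0 < μ₂)
    (hμ0 : 0 < μ) (hμa : μ < Real.sqrt a)
    (hτμ : τ < 1 → (1 - τ) * μ ^ 2 < lam₁ + τ * a ∧ (1 - τ) * μ ^ 2 < lam₂ + τ * a)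
    (hb1 : b + χ₂ * μ₂ - χ₁ * μ₁ >
      (τ * (μ + a / μ) + μ) * Ktm a τ χ₁ χ₂ lam₁ lam₂ μ₁ μ₂ μ +
        Mbartm a τ χ₁ χ₂ lam₁ lam₂ μ₁ μ₂ μ)
    (hb2 : b + 2 * (χ₂ * μ₂ - χ₁ * μ₁) >
      2 * (Mbar χ₁ χ₂ lam₁ lam₂ μ₁ μ₂ +
        τ * (μ + a / μ) * Kconst χ₁ χ₂ lam₁ lam₂ μ₁ μ₂))
    (hC₀ : 0 < C₀)
    (hμt₁ : μ < μt)
    (hμt₂ : μt < min (Real.sqrt a) (min (2 * μ)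
      (μ + (b + χ₂ * μ₂ - χ₁ * μ₁ - (τ * (μ + a / μ) + μ) * Ktm a τ χ₁ χ₂ lam₁ lam₂ μ₁ μ₂ μ) /
        (1 + Ktm a τ χ₁ χ₂ lam₁ lam₂ μ₁ μ₂ μ))))
    (hτμt : τ < 1 → (1 - τ) * μt ^ 2 < lam₁ + τ * a ∧ (1 - τ) * μt ^ 2 < lam₂ + τ * a) :
    ∃ d₀ ≥ max 1 (C₀ ^ ((μ - μt) / μ)),
    ∀ d ≥ d₀, ∀ u : ℝ → ℝ, memE C₀ μ μt d u →
    ∀ x : ℝ, x > Real.log d / (μt - μ) →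
      deriv (deriv (fun y => Real.exp (-μ * y) - d * Real.exp (-μt * y))) x +
        ((μ + a / μ) +
          deriv (fun y => χ₂ * Vfun a τ lam₂ μ₂ μ u y - χ₁ * Vfun a τ lam₁ μ₁ μ u y) x) *
          deriv (fun y => Real.exp (-μ * y) - d * Real.exp (-μt * y)) x +
        (a + χ₂ * lam₂ * Vfun a τ lam₂ μ₂ μ u x - χ₁ * lam₁ * Vfun a τ lam₁ μ₁ μ u x) *
          (Real.exp (-μ * x) - d * Real.exp (-μt * x)) +
        ((μ + a / μ) * τ *
            deriv (fun y => χ₁ * Vfun a τ lam₁ μ₁ μ u y - χ₂ * Vfun a τ lam₂ μ₂ μ u y) x -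
          (b + χ₂ * μ₂ - χ₁ * μ₁) * (Real.exp (-μ * x) - d * Real.exp (-μt * x))) *
          (Real.exp (-μ * x) - d * Real.exp (-μt * x)) ≥ 0 :=
  stmt_16_general a b τ χ₁ χ₂ lam₁ lam₂ μ₁ μ₂ μ μt C₀ ha hτ hχ₁ hχ₂ hlam₁ hlam₂ hμ₁ hμ₂ hμ0 hτμ hμt₁
    hμt₂
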